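/- arXiv:2512.08473 — 2 statements merged into one kernel-verified Lean document; each statement's English description precedes it below -/
import Mathlib

section
/- Let b : [0,1) → ℝ be continuously differentiable and define φ(z) = z e^{i b(|z|)} for z ∈ D. Then for every z = r e^{iθ} with 0 < r < 1, φ is real-differentiable at z with Wirtinger derivatives ∂φ(z) = e^{i b(r)} (1 + (i/2) r b′(r)) and ∂̄φ(z) = (i z² / (2r)) b′(r) e^{i b(r)}. Moreover, if 0 < C ≤ 1 and |b′(r)| ≤ C (1−r²) for all r ∈ [0,1), then |∂̄φ(z)| ≤ (3/4) C (1−|z|²) |∂φ(z)| for all z ∈ D with z ≠ 0. -/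
open MeasureTheory Set Filter Topology Complex
open scoped ENNReal NNReal

noncomputable section

/-- The open unit disc in `ℂ`. -/
def 𝔻 : Set ℂ := Metric.ball 0 1

/-- The normalized Lebesgue area measure on the unit disc. -/
def dA : Measure ℂ := (ENNReal.ofReal Real.pi)⁻¹ • (volume.restrict 𝔻)

/-- The Wirtinger derivative `∂f = (∂f/∂x - i ∂f/∂y)/2`. -/
def wirtDz (f : ℂ → ℂ) (z : ℂ) : ℂ :=
  (fderiv ℝ f z 1 - Complex.I * fderiv ℝ f z Complex.I) / 2

/-- The Wirtinger derivative `∂̄f = (∂f/∂x + i ∂f/∂y)/2`. -/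
def wirtDzbar (f : ℂ → ℂ) (z : ℂ) : ℂ :=
  (fderiv ℝ f z 1 + Complex.I * fderiv ℝ f z Complex.I) / 2

/-- Test functions: smooth compactly supported functions with support inside `𝔻`. -/
def IsTest (χ : ℂ → ℂ) : Prop :=
  ContDiff ℝ (⊤ : ℕ∞) χ ∧ HasCompactSupport χ ∧ tsupport χ ⊆ 𝔻

/-- `h` is the weak `∂̄`-derivative of `g` on the unit disc. -/
def HasWeakDzbarOn (g h : ℂ → ℂ) : Prop :=
  LocallyIntegrableOn g 𝔻 volume ∧ LocallyIntegrableOn h 𝔻 volume ∧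
    ∀ χ : ℂ → ℂ, IsTest χ →
      ∫ z, g z * wirtDzbar χ z ∂dA = - ∫ z, h z * χ z ∂dA

/-- `h` is the weak `∂`-derivative of `g` on the unit disc. -/
def HasWeakDzOn (g h : ℂ → ℂ) : Prop :=
  LocallyIntegrableOn g 𝔻 volume ∧ LocallyIntegrableOn h 𝔻 volume ∧
    ∀ χ : ℂ → ℂ, IsTest χ →
      ∫ z, g z * wirtDz χ z ∂dA = - ∫ z, h z * χ z ∂dA

/-- `φ` is a quasiconformal self-map of the unit disc with Beltrami coefficient `μ`:
an orientation-preserving homeomorphism of `𝔻` onto itself with first-order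
distributional derivatives in `L²(𝔻)` satisfying the Beltrami equation `∂̄φ = μ ∂φ` a.e.,
where `ess sup |μ| < 1`. -/
def IsQCWith (φ : ℂ → ℂ) (μbel : ℂ → ℂ) : Prop :=
  MapsTo φ 𝔻 𝔻 ∧ ContinuousOn φ 𝔻 ∧
  (∃ ψ : ℂ → ℂ, MapsTo ψ 𝔻 𝔻 ∧ ContinuousOn ψ 𝔻 ∧
    (∀ z ∈ 𝔻, ψ (φ z) = z) ∧ (∀ z ∈ 𝔻, φ (ψ z) = z)) ∧
  (∃ k : ℝ, k < 1 ∧ ∀ᵐ z ∂(volume.restrict 𝔻), ‖μbel z‖ ≤ k) ∧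
  ∃ h₁ h₂ : ℂ → ℂ,
    MemLp h₁ 2 (volume.restrict 𝔻) ∧ MemLp h₂ 2 (volume.restrict 𝔻) ∧
    HasWeakDzOn φ h₁ ∧ HasWeakDzbarOn φ h₂ ∧
    (∀ᵐ z ∂(volume.restrict 𝔻), h₂ z = μbel z * h₁ z) ∧
    (∀ᵐ z ∂(volume.restrict 𝔻), ‖h₂ z‖ ≤ ‖h₁ z‖)

/-- The measure `ω dA` on the unit disc associated to a weight `ω`. -/
def wMeasure (ω : ℂ → ℝ) : Measure ℂ := dA.withDensity (fun z => ENNReal.ofReal (ω z))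

/-- Membership in the weighted space `L^p_ω` (explicit form). -/
def MemLpW (p : ℝ) (ω : ℂ → ℝ) (f : ℂ → ℂ) : Prop :=
  AEStronglyMeasurable f dA ∧ (∫⁻ z, ENNReal.ofReal (‖f z‖ ^ p * ω z) ∂dA) < ⊤

/-- A weight: a continuous, radial, positive function on the disc vanishing at the boundary. -/
def IsWeight (ω : ℂ → ℝ) : Prop :=
  ContinuousOn ω 𝔻 ∧ (∀ z ∈ 𝔻, 0 < ω z) ∧
  (∀ z w : ℂ, z ∈ 𝔻 → w ∈ 𝔻 → ‖z‖ = ‖w‖ → ω z = ω w) ∧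
  Tendsto (fun r : ℝ => ω (r : ℂ)) (nhdsWithin 1 (Iio 1)) (nhds 0)

/-- The subset of `Lp` consisting of (classes of) functions analytic on the disc. -/
def bergmanSet (p : ℝ≥0∞) (μ : Measure ℂ) : Set (Lp ℂ p μ) :=
  {F | ∃ g : ℂ → ℂ, DifferentiableOn ℂ g 𝔻 ∧ (↑F : ℂ → ℂ) =ᵐ[μ] g}

/-- `P` is the orthogonal projection of `L²(μ)` onto the Bergman subspace. -/
def IsBergmanProjection (μ : Measure ℂ) (P : Lp ℂ 2 μ →L[ℂ] Lp ℂ 2 μ) : Prop :=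
  (∀ F, P F ∈ bergmanSet 2 μ) ∧
  (∀ F, ∀ G ∈ bergmanSet 2 μ, (inner ℂ (F - P F) G : ℂ) = 0)

/-- The Laplacian of a function `u : ℂ → ℝ` computed via iterated partial derivatives. -/
def lapl (u : ℂ → ℝ) (z : ℂ) : ℝ :=
  fderiv ℝ (fun w => fderiv ℝ u w 1) z 1 +
    fderiv ℝ (fun w => fderiv ℝ u w Complex.I) z Complex.I

/-- The weight class `W_A`, with associated function `τ`. -/
def IsWAWeight (ω : ℂ → ℝ) (τ : ℝ → ℝ) : Prop :=
  ∃ φ₀ : ℂ → ℝ,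
    (∀ z ∈ 𝔻, ω z = Real.exp (-2 * φ₀ z)) ∧
    ContDiffOn ℝ 2 φ₀ 𝔻 ∧
    (∀ z w : ℂ, z ∈ 𝔻 → w ∈ 𝔻 → ‖z‖ = ‖w‖ → φ₀ z = φ₀ w) ∧
    (∀ z ∈ 𝔻, 0 < lapl φ₀ z) ∧
    (∀ r ∈ Ico (0:ℝ) 1, 0 < τ r) ∧
    ContDiffOn ℝ 1 τ (Ico 0 1) ∧
    (∃ C : ℝ, 0 < C ∧ ∀ z ∈ 𝔻,
      C⁻¹ * τ ‖z‖ ≤ (lapl φ₀ z) ^ (-(1:ℝ)/2) ∧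
      (lapl φ₀ z) ^ (-(1:ℝ)/2) ≤ C * τ ‖z‖) ∧
    Tendsto τ (nhdsWithin 1 (Iio 1)) (nhds 0) ∧
    Tendsto (deriv τ) (nhdsWithin 1 (Iio 1)) (nhds 0) ∧
    ((∃ C : ℝ, 0 < C ∧ ∃ r₀ ∈ Ico (0:ℝ) 1,
        MonotoneOn (fun r => τ r * (1 - r) ^ (-C)) (Ico r₀ 1)) ∨
      Tendsto (fun r => deriv τ r * Real.log (τ r)) (nhdsWithin 1 (Iio 1)) (nhds 0)) ∧
    (∃ c : ℝ, 0 < c ∧ ∀ r ∈ Ioo (0:ℝ) 1,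
      c⁻¹ * ((1 - r) / (τ r) ^ 2) ≤ deriv (fun s : ℝ => φ₀ (s : ℂ)) r ∧
      deriv (fun s : ℝ => φ₀ (s : ℂ)) r ≤ c * ((1 - r) / (τ r) ^ 2))


private lemma s13_aux1 (z E : ℂ) (d r : ℝ) (hr : (r:ℂ) ≠ 0)
    (hzz : z * (starRingEnd ℂ) z = (r:ℂ)^2) :
    (z * E * Complex.I * (d : ℂ) * ((r : ℂ))⁻¹ * ((z.re : ℝ) : ℂ) + E
     - Complex.I * (z * E * Complex.I * (d : ℂ) * ((r : ℂ))⁻¹ * ((z.im : ℝ) : ℂ)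
      + E * Complex.I)) / 2
    = E * (1 + Complex.I / 2 * (r:ℂ) * (d:ℂ)) := by
  have hconj : ((z.re : ℝ) : ℂ) - Complex.I * ((z.im : ℝ) : ℂ) = (starRingEnd ℂ) z := by
    apply Complex.ext <;> simp
  have hI : Complex.I^2 = -1 := Complex.I_sq
  field_simp
  linear_combination (E * Complex.I * (d:ℂ)) * hzz + (z * E * Complex.I * (d:ℂ)) * hconj
    - E*(r:ℂ)*hI

private lemma s13_aux2 (z E : ℂ) (d r : ℝ) (hr : (r:ℂ) ≠ 0) :
    (z * E * Complex.I * (d : ℂ) * ((r : ℂ))⁻¹ * ((z.re : ℝ) : ℂ) + E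
     + Complex.I * (z * E * Complex.I * (d : ℂ) * ((r : ℂ))⁻¹ * ((z.im : ℝ) : ℂ)
      + E * Complex.I)) / 2
    = Complex.I * z ^ 2 / (2 * (r:ℂ)) * (d:ℂ) * E := by
  have hz : ((z.re : ℝ) : ℂ) + ((z.im : ℝ) : ℂ) * Complex.I = z := Complex.re_add_im z
  have hI : Complex.I^2 = -1 := Complex.I_sq
  field_simp
  linear_combination (z * E * Complex.I * (d:ℂ)) * hz + E*(r:ℂ)*hI

private lemma s13_aux3 (z E : ℂ) (d : ℝ) (hz0 : z ≠ 0) (hEnorm : ‖E‖ = 1) :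
    ‖Complex.I * z ^ 2 / (2 * ((‖z‖ : ℝ) : ℂ)) * ((d : ℝ) : ℂ) * E‖
      = ‖z‖ / 2 * |d| := by
  have hr0 : 0 < ‖z‖ := norm_pos_iff.mpr hz0
  rw [norm_mul, norm_mul, norm_div, norm_mul, hEnorm, Complex.norm_I, one_mul, norm_pow]
  simp only [Complex.norm_real, Real.norm_eq_abs, Complex.norm_ofNat, abs_of_pos hr0]
  have hane : ‖z‖ ≠ 0 := hr0.ne'
  simp only [norm_mul, Complex.norm_real, Real.norm_eq_abs, Complex.norm_ofNat, abs_of_pos hr0]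
  rw [mul_one]
  field_simp

/-- Wirtinger derivatives of `φ(z) = z e^{i b(|z|)}` and a Beltrami-type bound. -/
theorem statement13 (b : ℝ → ℝ) (hb : ContDiffOn ℝ 1 b (Ico 0 1))
    (φ : ℂ → ℂ)
    (hφdef : ∀ z : ℂ, φ z = z * Complex.exp (Complex.I * ((b ‖z‖ : ℝ) : ℂ))) :
    (∀ z ∈ 𝔻, z ≠ 0 →
      DifferentiableAt ℝ φ z ∧
      wirtDz φ z =
        Complex.exp (Complex.I * ((b ‖z‖ : ℝ) : ℂ)) *
          (1 + Complex.I / 2 * ((‖z‖ : ℝ) : ℂ) * ((deriv b ‖z‖ : ℝ) : ℂ)) ∧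
      wirtDzbar φ z =
        Complex.I * z ^ 2 / (2 * ((‖z‖ : ℝ) : ℂ)) * ((deriv b ‖z‖ : ℝ) : ℂ) *
          Complex.exp (Complex.I * ((b ‖z‖ : ℝ) : ℂ))) ∧
    (∀ C : ℝ, 0 < C → C ≤ 1 →
      (∀ r ∈ Ico (0:ℝ) 1, |deriv b r| ≤ C * (1 - r ^ 2)) →
      ∀ z ∈ 𝔻, z ≠ 0 →
        ‖wirtDzbar φ z‖ ≤ 3 / 4 * C * (1 - ‖z‖ ^ 2) * ‖wirtDz φ z‖) := by
  have main : ∀ z ∈ 𝔻, z ≠ 0 →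
      DifferentiableAt ℝ φ z ∧
      wirtDz φ z =
        Complex.exp (Complex.I * ((b ‖z‖ : ℝ) : ℂ)) *
          (1 + Complex.I / 2 * ((‖z‖ : ℝ) : ℂ) * ((deriv b ‖z‖ : ℝ) : ℂ)) ∧
      wirtDzbar φ z =
        Complex.I * z ^ 2 / (2 * ((‖z‖ : ℝ) : ℂ)) * ((deriv b ‖z‖ : ℝ) : ℂ) *
          Complex.exp (Complex.I * ((b ‖z‖ : ℝ) : ℂ)) := by
    intro z hz hz0
    have hr0 : 0 < ‖z‖ := norm_pos_iff.mpr hz0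
    have hr1 : ‖z‖ < 1 := by simpa [𝔻] using hz
    have hrC : ((‖z‖ : ℝ) : ℂ) ≠ 0 := by exact_mod_cast (ne_of_gt hr0)
    set E := Complex.exp (Complex.I * ((b ‖z‖ : ℝ) : ℂ)) with hE
    set d := deriv b ‖z‖ with hd
    set L : ℂ →L[ℝ] ℂ := z • (E • (Complex.I • (Complex.ofRealCLM.comp
          (d • ((1 / (2 * ‖z‖)) • (2 • (innerSL ℝ z))))))) +
       E • (ContinuousLinearMap.id ℝ ℂ) with hL
    have hF : HasFDerivAt φ L z := by
      rw [show φ = fun w => w * Complex.exp (Complex.I * ((b ‖w‖ : ℝ) : ℂ)) from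
        funext hφdef]
      have h1 := ((hasStrictFDerivAt_norm_sq z).hasFDerivAt).sqrt
        (ne_of_gt (by positivity : (0:ℝ) < ‖z‖^2))
      have h2 : (fun w : ℂ => Real.sqrt (‖w‖^2)) = fun w => ‖w‖ :=
        funext fun w => Real.sqrt_sq (norm_nonneg w)
      rw [h2, Real.sqrt_sq (norm_nonneg z)] at h1
      have hbd : HasDerivAt b d ‖z‖ := by
        have : ContDiffAt ℝ 1 b ‖z‖ := hb.contDiffAt (Ico_mem_nhds hr0 hr1)
        exact (this.differentiableAt (by norm_num)).hasDerivAt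
      have hB := hbd.comp_hasFDerivAt z h1
      have hC := (Complex.ofRealCLM.hasFDerivAt).comp z hB
      have hD := hC.const_mul Complex.I
      have hEx := hD.cexp
      exact (hasFDerivAt_id z).mul hEx
    have hL1 : L 1 = z * E * Complex.I * (d : ℂ) * ((‖z‖ : ℝ) : ℂ)⁻¹ *
        ((z.re : ℝ) : ℂ) + E := by
      rw [hL]; simp [RCLike.inner_apply]; ring
    have hLI : L Complex.I = z * E * Complex.I * (d : ℂ) * ((‖z‖ : ℝ) : ℂ)⁻¹ *
        ((z.im : ℝ) : ℂ) + E * Complex.I := by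
      rw [hL]; simp [RCLike.inner_apply]; ring
    have hzz : z * (starRingEnd ℂ) z = ((‖z‖ : ℝ) : ℂ)^2 := by
      rw [Complex.mul_conj]
      norm_cast
      rw [Complex.normSq_eq_norm_sq]
    refine ⟨hF.differentiableAt, ?_, ?_⟩
    · rw [wirtDz, hF.fderiv, hL1, hLI]
      exact s13_aux1 z E d ‖z‖ hrC hzz
    · rw [wirtDzbar, hF.fderiv, hL1, hLI]
      exact s13_aux2 z E d ‖z‖ hrC
  refine ⟨main, ?_⟩
  intro C hC0 hC1 hCb z hz hz0
  obtain ⟨_, hDz, hDzbar⟩ := main z hz hz0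
  have hr0 : 0 < ‖z‖ := norm_pos_iff.mpr hz0
  have hr1 : ‖z‖ < 1 := by simpa [𝔻] using hz
  set r := ‖z‖ with hr
  set d := deriv b r with hd
  have hdb : |d| ≤ C * (1 - r ^ 2) := hCb r ⟨hr0.le, hr1⟩
  have hEnorm : ‖Complex.exp (Complex.I * ((b r : ℝ) : ℂ))‖ = 1 := by
    rw [Complex.norm_exp]
    simp
  have h1 : ‖wirtDzbar φ z‖ = r / 2 * |d| := by
    rw [hDzbar]
    exact s13_aux3 z _ d hz0 hEnorm
  have hWge : 1 ≤ ‖wirtDz φ z‖ := by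
    rw [hDz, norm_mul, hEnorm, one_mul]
    have hre : (1 + Complex.I / 2 * ((r : ℝ) : ℂ) * ((d : ℝ) : ℂ)).re = 1 := by
      simp
    calc (1:ℝ) = |(1 + Complex.I / 2 * ((r : ℝ) : ℂ) * ((d : ℝ) : ℂ)).re| := by
          rw [hre]; norm_num
      _ ≤ ‖1 + Complex.I / 2 * ((r : ℝ) : ℂ) * ((d : ℝ) : ℂ)‖ :=
          Complex.abs_re_le_norm _
  have habs : 0 ≤ |d| := abs_nonneg d
  have h2 : r / 2 * |d| ≤ 3 / 4 * C * (1 - r ^ 2) := by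
    nlinarith [mul_pos hC0 (by nlinarith : (0:ℝ) < 1 - r ^ 2)]
  calc ‖wirtDzbar φ z‖ = r / 2 * |d| := h1
    _ ≤ 3 / 4 * C * (1 - r ^ 2) := h2
    _ = 3 / 4 * C * (1 - r ^ 2) * 1 := by ring
    _ ≤ 3 / 4 * C * (1 - r ^ 2) * ‖wirtDz φ z‖ := by
        apply mul_le_mul_of_nonneg_left hWge
        nlinarith


end
end

section
/- Let R = (3/7)^{1/4} and define φ̃ : D → D by φ̃(w) = w for R < |w| < 1, φ̃(w) = −R w/|w| for 0 < |w| ≤ R, and φ̃(0) = 0. Then ∫_D φ̃(w) (1 − z·conj(w))^{−2} dA(w) = 0 for every z ∈ D. Consequently, the Bergman projection P of the unweighted space L²(D, dA) onto A² maps the function φ̃ = C_φ̃(id) to the zero function, so the projected composition operator K_φ̃ = P ∘ C_φ̃ : A² → A² satisfies K_φ̃(id) = 0 and is not injective (here id(z) = z). -/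
open MeasureTheory Set Filter Topology Complex
open scoped ENNReal NNReal

noncomputable section

section AuxLemmas
open scoped Real

lemma norm_exp_neg_mul_I (θ : ℝ) : ‖Complex.exp (-(θ * I))‖ = 1 := by
  have : Complex.exp (-(↑θ * I)) = Complex.exp (↑(-θ) * I) := by push_cast; ring_nf
  rw [this, Complex.norm_exp_ofReal_mul_I]

lemma one_sub_ne (a : ℂ) (ha : ‖a‖ < 1) (θ : ℝ) : (1 : ℂ) - a * Complex.exp (-(θ * I)) ≠ 0 := by
  intro h
  have h1 : (1:ℂ) = a * Complex.exp (-(θ*I)) := sub_eq_zero.mp h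
  have : (1:ℝ) = ‖a‖ := by
    calc (1:ℝ) = ‖(1:ℂ)‖ := by simp
    _ = ‖a * Complex.exp (-(θ*I))‖ := by rw [← h1]
    _ = ‖a‖ := by rw [norm_mul, norm_exp_neg_mul_I, mul_one]
  linarith

lemma exp_sub_ne (a : ℂ) (ha : ‖a‖ < 1) (θ : ℝ) : Complex.exp (θ * I) - a ≠ 0 := by
  intro h
  have h1 : Complex.exp (θ*I) = a := sub_eq_zero.mp h
  have : (1:ℝ) = ‖a‖ := by rw [← h1, Complex.norm_exp_ofReal_mul_I]
  linarith

lemma hasDerivAt_H (a : ℂ) (ha : ‖a‖ < 1) (θ : ℝ) :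
    HasDerivAt (fun θ : ℝ => -I * Complex.exp (θ*I) + 2*a*θ
        - 2*I*a*Complex.log (1 - a * Complex.exp (-(θ*I)))
        + I*a^2*(Complex.exp (θ*I) - a)⁻¹)
      (Complex.exp (θ*I) * (((1:ℂ) - a * Complex.exp (-(θ*I)))^2)⁻¹) θ := by
  have hc : HasDerivAt (fun t : ℝ => (t : ℂ)) 1 θ := by
    simpa using (hasDerivAt_id θ).ofReal_comp
  have hθ : HasDerivAt (fun t : ℝ => (t : ℂ) * I) I θ := by simpa using hc.mul_const I
  have he1 : HasDerivAt (fun t : ℝ => Complex.exp (t * I)) (Complex.exp (θ*I) * I) θ := hθ.cexp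
  have he2 : HasDerivAt (fun t : ℝ => Complex.exp (-(t * I)))
      (Complex.exp (-(θ*I)) * (-I)) θ := hθ.neg.cexp
  have hg : HasDerivAt (fun t : ℝ => (1:ℂ) - a * Complex.exp (-(t * I)))
      (-(a * (Complex.exp (-(θ*I)) * (-I)))) θ := (he2.const_mul a).const_sub 1
  have hslit : (1:ℂ) - a * Complex.exp (-(θ*I)) ∈ Complex.slitPlane := by
    rw [Complex.mem_slitPlane_iff]
    left
    have h1 : (a * Complex.exp (-(θ*I))).re ≤ ‖a‖ := by
      calc (a * Complex.exp (-(θ*I))).re ≤ ‖a * Complex.exp (-(θ*I))‖ := Complex.re_le_norm _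
      _ = ‖a‖ := by rw [norm_mul, norm_exp_neg_mul_I, mul_one]
    simp only [Complex.sub_re, Complex.one_re]
    linarith
  have hlog : HasDerivAt (fun t : ℝ => Complex.log (1 - a * Complex.exp (-(t * I))))
      ((-(a * (Complex.exp (-(θ*I)) * (-I)))) / (1 - a * Complex.exp (-(θ*I)))) θ :=
    hg.clog_real hslit
  have hinv : HasDerivAt (fun t : ℝ => (Complex.exp (t * I) - a)⁻¹)
      ((-((Complex.exp (θ*I) - a)^2)⁻¹) * (Complex.exp (θ*I) * I)) θ :=
    (hasDerivAt_inv (exp_sub_ne a ha θ)).comp θ (he1.sub_const a)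
  have H := (((he1.const_mul (-I)).add ((hc.const_mul (2*a)))).sub
      (hlog.const_mul (2*I*a))).add (hinv.const_mul (I*a^2))
  convert H using 1
  · rfl
  · rfl
  have ht : Complex.exp (θ*I) ≠ 0 := Complex.exp_ne_zero _
  have hs : Complex.exp (-(θ*(I:ℂ))) = (Complex.exp (θ*I))⁻¹ := by rw [← Complex.exp_neg]
  rw [hs]
  have h1 : (1:ℂ) - a * (Complex.exp (θ*I))⁻¹ ≠ 0 := by rw [← hs]; exact one_sub_ne a ha θ
  have h2 : Complex.exp (θ*(I:ℂ)) - a ≠ 0 := exp_sub_ne a ha θ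
  field_simp
  ring_nf
  simp only [Complex.I_sq]
  ring

lemma angular (a : ℂ) (ha : ‖a‖ < 1) :
    ∫ θ in (-π)..π, Complex.exp (θ*I) * (((1:ℂ) - a * Complex.exp (-(θ*I)))^2)⁻¹
      = 4 * π * a := by
  have hcont : Continuous fun θ : ℝ => Complex.exp (θ*I) * (((1:ℂ) - a * Complex.exp (-(θ*I)))^2)⁻¹ := by
    apply Continuous.mul
    · exact (Complex.continuous_ofReal.mul continuous_const).cexp
    · apply Continuous.inv₀
      · fun_prop
      · intro θ
        exact pow_ne_zero 2 (one_sub_ne a ha θ)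
  have key := intervalIntegral.integral_eq_sub_of_hasDerivAt
    (f := fun θ : ℝ => -I * Complex.exp (θ*I) + 2*a*θ
        - 2*I*a*Complex.log (1 - a * Complex.exp (-(θ*I)))
        + I*a^2*(Complex.exp (θ*I) - a)⁻¹)
    (fun θ _ => hasDerivAt_H a ha θ)
    (hcont.intervalIntegrable (-π) π)
  rw [key]
  have e1 : Complex.exp (↑π * I) = -1 := Complex.exp_pi_mul_I
  have e2 : Complex.exp (-(↑π * I)) = -1 := by
    rw [Complex.exp_neg, e1]; norm_num
  push_cast
  rw [show (-(π:ℂ)) * I = -((π:ℂ) * I) by ring, show -(-((π:ℂ) * I)) = (π:ℂ) * I by ring,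
    e1, e2]
  ring

noncomputable def myPhi (R : ℝ) : ℂ → ℂ := fun w => if ‖w‖ ≤ R then -(R:ℂ) * w / (‖w‖ : ℂ) else w

lemma measurable_myPhi (R : ℝ) : Measurable (myPhi R) := by
  unfold myPhi
  apply Measurable.ite
  · exact measurableSet_le measurable_norm measurable_const
  · exact (measurable_const.mul measurable_id).div
      (Complex.measurable_ofReal.comp measurable_norm)
  · exact measurable_id

lemma norm_myPhi_le (R : ℝ) (hR0 : 0 < R) (hR1 : R < 1) (w : ℂ) (hw : ‖w‖ ≤ 1) :
    ‖myPhi R w‖ ≤ 1 := by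
  unfold myPhi
  split_ifs with h
  · rcases eq_or_ne w 0 with rfl | hw0
    · simp
    · have hnw : (0:ℝ) < ‖w‖ := norm_pos_iff.mpr hw0
      rw [norm_div, norm_mul, norm_neg, Complex.norm_real, Complex.norm_real,
        Real.norm_eq_abs, Real.norm_eq_abs, abs_of_pos hR0, abs_of_pos hnw]
      rw [mul_div_assoc, div_self hnw.ne', mul_one]
      linarith
  · exact hw

lemma myPhi_polar (R : ℝ) (hR0 : 0 < R) (r θ : ℝ) (hr : 0 < r) :
    myPhi R ((r:ℂ) * Complex.exp (θ*I))
      = (if r ≤ R then -(R:ℂ) else (r:ℂ)) * Complex.exp (θ*I) := by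
  have hnorm : ‖(r:ℂ) * Complex.exp (θ*I)‖ = r := by
    rw [norm_mul, Complex.norm_real, Complex.norm_exp_ofReal_mul_I, mul_one,
      Real.norm_eq_abs, abs_of_pos hr]
  unfold myPhi
  rw [hnorm]
  split_ifs with h
  · have : (r:ℂ) ≠ 0 := by exact_mod_cast hr.ne'
    field_simp
  · rfl

lemma kernel_bound (z w : ℂ) (hz : ‖z‖ < 1) (hw : ‖w‖ ≤ 1) :
    ‖(((1:ℂ) - z * (starRingEnd ℂ) w) ^ 2)⁻¹‖ ≤ (((1:ℝ) - ‖z‖) ^ 2)⁻¹ := by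
  have h1 : (1:ℝ) - ‖z‖ ≤ ‖(1:ℂ) - z * (starRingEnd ℂ) w‖ := by
    have h2 : ‖z * (starRingEnd ℂ) w‖ ≤ ‖z‖ := by
      rw [norm_mul, RCLike.norm_conj]
      nlinarith [norm_nonneg z, norm_nonneg w]
    calc (1:ℝ) - ‖z‖ ≤ ‖(1:ℂ)‖ - ‖z * (starRingEnd ℂ) w‖ := by rw [norm_one]; linarith
    _ ≤ ‖(1:ℂ) - z * (starRingEnd ℂ) w‖ := norm_sub_norm_le _ _
  have h0 : (0:ℝ) < 1 - ‖z‖ := by linarith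
  rw [norm_inv, norm_pow]
  gcongr <;> nlinarith

lemma symm_eq (p : ℝ × ℝ) :
    Complex.polarCoord.symm p = (p.1 : ℂ) * Complex.exp (p.2 * I) := by
  rw [Complex.polarCoord_symm_apply, Complex.exp_mul_I, ← Complex.ofReal_cos,
    ← Complex.ofReal_sin]

lemma conj_polar (r θ : ℝ) :
    (starRingEnd ℂ) ((r:ℂ) * Complex.exp (θ * I)) = (r:ℂ) * Complex.exp (-(θ * I)) := by
  rw [map_mul, Complex.conj_ofReal, ← Complex.exp_conj, map_mul, Complex.conj_ofReal,
    Complex.conj_I, mul_neg]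

lemma continuous_symm : Continuous fun p : ℝ × ℝ => Complex.polarCoord.symm p := by
  simp only [Complex.polarCoord_symm_apply]
  fun_prop

lemma integrableOn_f (R : ℝ) (hR0 : 0 < R) (hR1 : R < 1) (z : ℂ) (hz : ‖z‖ < 1) :
    IntegrableOn (fun w => myPhi R w * (((1:ℂ) - z * (starRingEnd ℂ) w) ^ 2)⁻¹)
      (Metric.ball (0:ℂ) 1) volume := by
  have hmeas : Measurable fun w => myPhi R w * (((1:ℂ) - z * (starRingEnd ℂ) w) ^ 2)⁻¹ := by
    apply (measurable_myPhi R).mul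
    apply Measurable.inv
    apply Measurable.pow_const
    exact (measurable_const.sub (measurable_const.mul (Complex.continuous_conj.measurable)))
  apply Integrable.mono' (g := fun _ => (((1:ℝ) - ‖z‖) ^ 2)⁻¹)
  · exact integrableOn_const measure_ball_lt_top.ne
  · exact hmeas.aestronglyMeasurable
  · apply ae_restrict_of_forall_mem measurableSet_ball
    intro w hw
    have hw1 : ‖w‖ ≤ 1 := by
      rw [Metric.mem_ball, dist_zero_right] at hw; linarith
    calc ‖myPhi R w * (((1:ℂ) - z * (starRingEnd ℂ) w) ^ 2)⁻¹‖
        = ‖myPhi R w‖ * ‖(((1:ℂ) - z * (starRingEnd ℂ) w) ^ 2)⁻¹‖ := norm_mul _ _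
      _ ≤ 1 * (((1:ℝ) - ‖z‖) ^ 2)⁻¹ := by
          apply mul_le_mul (norm_myPhi_le R hR0 hR1 w hw1) (kernel_bound z w hz hw1)
            (norm_nonneg _) zero_le_one
      _ = (((1:ℝ) - ‖z‖) ^ 2)⁻¹ := one_mul _

lemma norm_f_le (R : ℝ) (hR0 : 0 < R) (hR1 : R < 1) (z : ℂ) (hz : ‖z‖ < 1)
    (w : ℂ) (hw1 : ‖w‖ ≤ 1) :
    ‖myPhi R w * (((1:ℂ) - z * (starRingEnd ℂ) w) ^ 2)⁻¹‖ ≤ (((1:ℝ) - ‖z‖) ^ 2)⁻¹ := by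
  calc ‖myPhi R w * (((1:ℂ) - z * (starRingEnd ℂ) w) ^ 2)⁻¹‖
      = ‖myPhi R w‖ * ‖(((1:ℂ) - z * (starRingEnd ℂ) w) ^ 2)⁻¹‖ := norm_mul _ _
    _ ≤ 1 * (((1:ℝ) - ‖z‖) ^ 2)⁻¹ :=
        mul_le_mul (norm_myPhi_le R hR0 hR1 w hw1) (kernel_bound z w hz hw1)
          (norm_nonneg _) zero_le_one
    _ = (((1:ℝ) - ‖z‖) ^ 2)⁻¹ := one_mul _

lemma radial_integral (R : ℝ) (hR0 : 0 < R) (hR1 : R < 1) (hR4 : R ^ 4 = 3/7) :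
    ∫ r in Ioo (0:ℝ) 1, (r:ℂ)^2 * (if r ≤ R then -(R:ℂ) else (r:ℂ)) = 0 := by
  have hRC : ((R:ℂ))^4 = 3/7 := by
    rw [show ((R:ℂ))^4 = ((R^4 : ℝ) : ℂ) by push_cast; ring, hR4]
    norm_num
  rw [← MeasureTheory.integral_Ioc_eq_integral_Ioo,
    ← Set.Ioc_union_Ioc_eq_Ioc hR0.le hR1.le]
  have hint1 : IntegrableOn (fun r : ℝ => (r:ℂ)^2 * (if r ≤ R then -(R:ℂ) else (r:ℂ)))
      (Ioc 0 R) volume := by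
    apply IntegrableOn.congr_fun (f := fun r : ℝ => ((r^2 * (-R) : ℝ) : ℂ))
    · apply Continuous.integrableOn_Ioc
      fun_prop
    · intro r hr
      simp only
      rw [if_pos hr.2]
      push_cast; ring
    · exact measurableSet_Ioc
  have hint2 : IntegrableOn (fun r : ℝ => (r:ℂ)^2 * (if r ≤ R then -(R:ℂ) else (r:ℂ)))
      (Ioc R 1) volume := by
    apply IntegrableOn.congr_fun (f := fun r : ℝ => ((r^3 : ℝ) : ℂ))
    · apply Continuous.integrableOn_Ioc
      fun_prop
    · intro r hr
      simp only
      rw [if_neg (not_le.mpr hr.1)]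
      push_cast; ring
    · exact measurableSet_Ioc
  rw [setIntegral_union (Set.Ioc_disjoint_Ioc_of_le le_rfl) measurableSet_Ioc hint1 hint2]
  have e1 : ∫ r in Ioc (0:ℝ) R, (r:ℂ)^2 * (if r ≤ R then -(R:ℂ) else (r:ℂ))
      = ((-(R^4)/3 : ℝ) : ℂ) := by
    rw [setIntegral_congr_fun measurableSet_Ioc
      (g := fun r : ℝ => ((r^2 * (-R) : ℝ) : ℂ))
      (by intro r hr; simp only; rw [if_pos hr.2]; push_cast; ring)]
    rw [← intervalIntegral.integral_of_le hR0.le, intervalIntegral.integral_ofReal]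
    norm_cast
    rw [intervalIntegral.integral_mul_const, integral_pow]
    ring
  have e2 : ∫ r in Ioc R 1, (r:ℂ)^2 * (if r ≤ R then -(R:ℂ) else (r:ℂ))
      = (((1 - R^4)/4 : ℝ) : ℂ) := by
    rw [setIntegral_congr_fun measurableSet_Ioc
      (g := fun r : ℝ => ((r^3 : ℝ) : ℂ))
      (by intro r hr; simp only; rw [if_neg (not_le.mpr hr.1)]; push_cast; ring)]
    rw [← intervalIntegral.integral_of_le hR1.le, intervalIntegral.integral_ofReal]
    norm_cast
    rw [integral_pow]
    norm_num
  rw [e1, e2]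
  push_cast
  linear_combination (-(1:ℂ)/3 - 1/4) * hRC

lemma key_integral (R : ℝ) (hR0 : 0 < R) (hR1 : R < 1) (hR4 : R ^ 4 = 3/7)
    (z : ℂ) (hz : ‖z‖ < 1) :
    ∫ w in Metric.ball (0:ℂ) 1,
      myPhi R w * (((1:ℂ) - z * (starRingEnd ℂ) w) ^ 2)⁻¹ ∂volume = 0 := by
  set f : ℂ → ℂ := fun w => myPhi R w * (((1:ℂ) - z * (starRingEnd ℂ) w) ^ 2)⁻¹ with hf
  set G : ℝ × ℝ → ℂ := fun p => p.1 • f (Complex.polarCoord.symm p) with hG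
  set S : Set (ℝ × ℝ) := Ioo (0:ℝ) 1 ×ˢ Ioo (-π) π with hS
  have hfmeas : Measurable f := by
    apply (measurable_myPhi R).mul
    exact (Measurable.pow_const
      (measurable_const.sub (measurable_const.mul Complex.continuous_conj.measurable)) 2).inv
  have hSmeas : MeasurableSet S := measurableSet_Ioo.prod measurableSet_Ioo
  -- Step 1: polar coordinates
  have step1 : ∫ w in Metric.ball (0:ℂ) 1, f w ∂volume = ∫ p in S, G p := by
    rw [← integral_indicator measurableSet_ball,
      ← Complex.integral_comp_polarCoord_symm (fun w => (Metric.ball (0:ℂ) 1).indicator f w)]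
    have hpt : ∀ p ∈ polarCoord.target,
        p.1 • (Metric.ball (0:ℂ) 1).indicator f (Complex.polarCoord.symm p)
          = S.indicator G p := by
      rintro ⟨r, θ⟩ ⟨hr, hθ⟩
      simp only [Set.mem_Ioi] at hr
      have habs : ‖Complex.polarCoord.symm (r, θ)‖ = r := by
        rw [Complex.norm_polarCoord_symm, abs_of_pos hr]
      by_cases h1 : r < 1
      · rw [Set.indicator_of_mem (by rw [Metric.mem_ball, dist_zero_right, habs]; exact h1),
          Set.indicator_of_mem (by exact ⟨⟨hr, h1⟩, hθ⟩)]
      · rw [Set.indicator_of_notMem (by rw [Metric.mem_ball, dist_zero_right, habs]; exact h1),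
          Set.indicator_of_notMem (by rintro ⟨⟨_, h2⟩, _⟩; exact h1 h2),
          smul_zero]
    have hsub : S ⊆ polarCoord.target := by
      rintro ⟨r, θ⟩ ⟨hr, hθ⟩
      exact ⟨hr.1, hθ⟩
    rw [setIntegral_congr_fun polarCoord.open_target.measurableSet hpt,
      setIntegral_indicator hSmeas, Set.inter_eq_self_of_subset_right hsub]
  rw [step1]
  -- Step 2: integrability for Fubini
  have hGint : IntegrableOn G S volume := by
    apply Integrable.mono' (g := fun _ => (((1:ℝ) - ‖z‖) ^ 2)⁻¹)
    · refine integrableOn_const (ne_of_lt ?_)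
      rw [hS, Measure.volume_eq_prod, Measure.prod_prod]
      exact ENNReal.mul_lt_top (by rw [Real.volume_Ioo]; exact ENNReal.ofReal_lt_top)
        (by rw [Real.volume_Ioo]; exact ENNReal.ofReal_lt_top)
    · exact (measurable_fst.smul
        (hfmeas.comp continuous_symm.measurable)).aestronglyMeasurable
    · apply ae_restrict_of_forall_mem hSmeas
      rintro ⟨r, θ⟩ ⟨hr, hθ⟩
      have habs : ‖Complex.polarCoord.symm (r, θ)‖ = r := by
        rw [Complex.norm_polarCoord_symm, abs_of_pos hr.1]
      calc ‖G (r, θ)‖ = |r| * ‖f (Complex.polarCoord.symm (r, θ))‖ := by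
            rw [hG, norm_smul, Real.norm_eq_abs]
        _ ≤ 1 * (((1:ℝ) - ‖z‖) ^ 2)⁻¹ := by
            apply mul_le_mul (by rw [abs_of_pos hr.1]; exact hr.2.le)
              (norm_f_le R hR0 hR1 z hz _ (by rw [habs]; exact hr.2.le))
              (norm_nonneg _) zero_le_one
        _ = (((1:ℝ) - ‖z‖) ^ 2)⁻¹ := one_mul _
  -- Step 3: Fubini
  rw [hS, Measure.volume_eq_prod] at *
  rw [setIntegral_prod G hGint]
  -- Step 4: inner integral
  have inner_eq : ∀ r ∈ Ioo (0:ℝ) 1,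
      (∫ θ in Ioo (-π) π, G (r, θ))
        = (4 * (π:ℂ) * z) * ((r:ℂ)^2 * (if r ≤ R then -(R:ℂ) else (r:ℂ))) := by
    intro r hr
    have ha : ‖z * (r:ℂ)‖ < 1 := by
      rw [norm_mul, Complex.norm_real, Real.norm_eq_abs, abs_of_pos hr.1]
      nlinarith [norm_nonneg z, hr.1, hr.2]
    have hpt : ∀ θ : ℝ, G (r, θ)
        = ((r:ℂ) * (if r ≤ R then -(R:ℂ) else (r:ℂ)))
          * (Complex.exp (θ*I) * (((1:ℂ) - (z * (r:ℂ)) * Complex.exp (-(θ*I)))^2)⁻¹) := by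
      intro θ
      rw [hG, hf]
      simp only [symm_eq]
      rw [conj_polar, myPhi_polar R hR0 r θ hr.1, Complex.real_smul, ← mul_assoc (z)]
      ring
    rw [setIntegral_congr_fun measurableSet_Ioo (fun θ _ => hpt θ),
      MeasureTheory.integral_const_mul, ← MeasureTheory.integral_Ioc_eq_integral_Ioo,
      ← intervalIntegral.integral_of_le (by linarith [Real.pi_pos]),
      angular (z * (r:ℂ)) ha]
    ring
  rw [setIntegral_congr_fun measurableSet_Ioo inner_eq, MeasureTheory.integral_const_mul,
    radial_integral R hR0 hR1 hR4, mul_zero]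

end AuxLemmas

/-- the Bergman projection annihilates the symbol `φ̃`, so `K_φ̃` is not injective. -/
theorem statement16 (R : ℝ) (hR : R = (3 / 7 : ℝ) ^ ((1:ℝ) / 4))
    (φt : ℂ → ℂ) (hφ0 : φt 0 = 0)
    (hφ1 : ∀ w : ℂ, w ≠ 0 → ‖w‖ ≤ R → φt w = -((R : ℝ) : ℂ) * w / ((‖w‖ : ℝ) : ℂ))
    (hφ2 : ∀ w : ℂ, R < ‖w‖ → ‖w‖ < 1 → φt w = w) :
    (∀ z ∈ 𝔻,
      Integrable (fun w => φt w * ((1 - z * (starRingEnd ℂ) w) ^ 2)⁻¹) dA ∧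
      ∫ w, φt w * ((1 - z * (starRingEnd ℂ) w) ^ 2)⁻¹ ∂dA = 0) ∧
    -- `K_φ̃` maps `id` to `0`, hence is not injective on `A²`:
    ¬ ∀ f₁ f₂ : ℂ → ℂ,
        (DifferentiableOn ℂ f₁ 𝔻 ∧ MemLpW 2 (fun _ => (1:ℝ)) f₁) →
        (DifferentiableOn ℂ f₂ 𝔻 ∧ MemLpW 2 (fun _ => (1:ℝ)) f₂) →
        (∀ z ∈ 𝔻,
          ∫ w, f₁ (φt w) * ((1 - z * (starRingEnd ℂ) w) ^ 2)⁻¹ ∂dA =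
          ∫ w, f₂ (φt w) * ((1 - z * (starRingEnd ℂ) w) ^ 2)⁻¹ ∂dA) →
        ∀ z ∈ 𝔻, f₁ z = f₂ z := by
  have hR0 : 0 < R := hR ▸ Real.rpow_pos_of_pos (by norm_num) _
  have hR1 : R < 1 := by
    rw [hR]
    exact Real.rpow_lt_one (by norm_num) (by norm_num) (by norm_num)
  have hR4 : R ^ 4 = 3 / 7 := by
    rw [hR, ← Real.rpow_natCast (((3:ℝ)/7) ^ ((1:ℝ)/4)) 4, ← Real.rpow_mul (by norm_num)]
    norm_num
  have h𝔻 : 𝔻 = Metric.ball (0:ℂ) 1 := rfl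
  have hagree : ∀ w ∈ 𝔻, φt w = myPhi R w := by
    intro w hw
    have hw1 : ‖w‖ < 1 := by rwa [h𝔻, Metric.mem_ball, dist_zero_right] at hw
    unfold myPhi
    rcases eq_or_ne w 0 with rfl | hw0
    · simp [hφ0, hR0.le]
    · by_cases hle : ‖w‖ ≤ R
      · rw [if_pos hle, hφ1 w hw0 hle]
      · rw [if_neg hle, hφ2 w (not_le.mp hle) hw1]
  have hcnetop : ((ENNReal.ofReal Real.pi)⁻¹ : ℝ≥0∞) ≠ ⊤ := by
    rw [Ne, ENNReal.inv_eq_top, ENNReal.ofReal_eq_zero]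
    exact not_le.mpr Real.pi_pos
  have hdA_c : ∀ z ∈ 𝔻,
      Integrable (fun w => φt w * ((1 - z * (starRingEnd ℂ) w) ^ 2)⁻¹) dA ∧
      ∫ w, φt w * ((1 - z * (starRingEnd ℂ) w) ^ 2)⁻¹ ∂dA = 0 := by
    intro z hz
    have hz1 : ‖z‖ < 1 := by rwa [h𝔻, Metric.mem_ball, dist_zero_right] at hz
    have hae : (fun w => myPhi R w * ((1 - z * (starRingEnd ℂ) w) ^ 2)⁻¹)
        =ᵐ[volume.restrict 𝔻] fun w => φt w * ((1 - z * (starRingEnd ℂ) w) ^ 2)⁻¹ := by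
      rw [h𝔻]
      apply ae_restrict_of_forall_mem measurableSet_ball
      intro w hw
      simp only
      rw [hagree w hw]
    constructor
    · rw [dA]
      apply Integrable.smul_measure _ hcnetop
      exact ((integrableOn_f R hR0 hR1 z hz1).congr hae : _)
    · rw [dA, integral_smul_measure, integral_congr_ae hae.symm, h𝔻,
        key_integral R hR0 hR1 hR4 z hz1, smul_zero]
  refine ⟨hdA_c, ?_⟩
  intro hcon
  have hball : dA 𝔻ᶜ = 0 := by
    simp only [dA, Measure.smul_apply, h𝔻]
    rw [Measure.restrict_apply (measurableSet_ball.compl), Set.compl_inter_self,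
      measure_empty, smul_zero]
  have hdAfin : dA Set.univ < ⊤ := by
    simp only [dA, Measure.smul_apply]
    rw [Measure.restrict_apply_univ]
    exact ENNReal.mul_lt_top hcnetop.lt_top measure_ball_lt_top
  have hmem1 : MemLpW 2 (fun _ => (1:ℝ)) (fun w : ℂ => w) := by
    constructor
    · exact aestronglyMeasurable_id
    · calc ∫⁻ w, ENNReal.ofReal (‖w‖ ^ (2:ℝ) * 1) ∂dA ≤ ∫⁻ _, 1 ∂dA := by
            apply lintegral_mono_ae
            have hae𝔻 : ∀ᵐ w ∂dA, w ∈ 𝔻 := by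
              rw [ae_iff]
              exact hball
            filter_upwards [hae𝔻] with w hw
            have hw1 : ‖w‖ < 1 := by rwa [h𝔻, Metric.mem_ball, dist_zero_right] at hw
            rw [mul_one]
            apply ENNReal.ofReal_le_one.mpr
            exact Real.rpow_le_one (norm_nonneg w) hw1.le (by norm_num)
        _ < ⊤ := by rw [lintegral_one]; exact hdAfin
  have hmem2 : MemLpW 2 (fun _ => (1:ℝ)) (fun _ : ℂ => (0:ℂ)) := by
    constructor
    · exact aestronglyMeasurable_const
    · simp [Real.zero_rpow, (by norm_num : (2:ℝ) ≠ 0)]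
  have heq := hcon (fun w => w) (fun _ => 0)
    ⟨differentiable_id.differentiableOn, hmem1⟩
    ⟨(differentiable_const 0).differentiableOn, hmem2⟩
    (by
      intro z hz
      rw [(hdA_c z hz).2]
      simp)
    (((1:ℝ)/2 : ℝ) : ℂ)
    (by
      rw [h𝔻, Metric.mem_ball, dist_zero_right, Complex.norm_real, Real.norm_eq_abs,
        abs_of_pos (by norm_num : (0:ℝ) < 1/2)]
      norm_num)
  rw [Complex.ofReal_eq_zero] at heq
  norm_num at heq

end
end
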